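/- arXiv:1705.00879 — 3 statements merged into one kernel-verified Lean document; each statement's English description precedes it below -/
import Mathlib

section
/- Let M ∈ ℤ^{d×d} be regular, m := |det M|, and let f be a function on the torus T^d lying in the Wiener algebra A(T^d). Then for every h ∈ G(M^T) the discrete Fourier coefficients of the samples of f on the pattern equal the bracket sum of its Fourier coefficients: (1/m) Σ_{y ∈ P(M)} f(2πy) e^{−2πi h·y} = [c(f)]_h^M = Σ_{z ∈ ℤ^d} c_{h + M^T z}(f). -/
open MeasureTheory Complex Matrix
open scoped BigOperators Classical

noncomputable section

namespace ElastFFT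

variable (d : ℕ)

/-- Real action of an integer matrix on a real vector. -/
def mulVecR (M : Matrix (Fin d) (Fin d) ℤ) (y : Fin d → ℝ) : Fin d → ℝ :=
  (M.map (Int.cast : ℤ → ℝ)).mulVec y

/-- The lattice Λ(M) = M⁻¹ ℤ^d. -/
def lattice (M : Matrix (Fin d) (Fin d) ℤ) : Set (Fin d → ℝ) :=
  {y | ∃ z : Fin d → ℤ, mulVecR d M y = fun i => (z i : ℝ)}

/-- The pattern P(M) = Λ(M) ∩ [-1/2, 1/2)^d. -/
def pattern (M : Matrix (Fin d) (Fin d) ℤ) : Set (Fin d → ℝ) :=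
  {y | y ∈ lattice d M ∧ ∀ i, y i ∈ Set.Ico (-(1/2) : ℝ) (1/2)}

/-- The generating set G(N) = ℤ^d ∩ N·[-1/2,1/2)^d. -/
def genSet (N : Matrix (Fin d) (Fin d) ℤ) : Set (Fin d → ℤ) :=
  {h | ∃ y : Fin d → ℝ, (∀ i, y i ∈ Set.Ico (-(1/2) : ℝ) (1/2)) ∧
        (fun i => (h i : ℝ)) = mulVecR d N y}

/-- The fundamental cell [-π, π)^d of the torus. -/
def cube : Set (Fin d → ℝ) := Set.univ.pi fun _ => Set.Ico (-Real.pi) Real.pi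

/-- Pairing of an integer frequency and a real point. -/
def dot (k : Fin d → ℤ) (x : Fin d → ℝ) : ℝ := ∑ i, (k i : ℝ) * x i

/-- A function on the torus: 2π-periodic in each coordinate. -/
def TorusFun (f : (Fin d → ℝ) → ℂ) : Prop :=
  ∀ (x : Fin d → ℝ) (z : Fin d → ℤ), f (x + fun i => 2 * Real.pi * (z i : ℝ)) = f x

/-- The L²(𝕋^d) inner product (normalised). -/
def torusInner (f g : (Fin d → ℝ) → ℂ) : ℂ :=
  (((2 * Real.pi) ^ d : ℝ) : ℂ)⁻¹ * ∫ x in cube d, f x * (starRingEnd ℂ) (g x)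

/-- Fourier coefficient c_k(f). -/
def fCoeff (f : (Fin d → ℝ) → ℂ) (k : Fin d → ℤ) : ℂ :=
  torusInner d f fun x => Complex.exp (Complex.I * (dot d k x : ℝ))

/-- Membership in the Wiener algebra A(𝕋^d). -/
def InWiener (f : (Fin d → ℝ) → ℂ) : Prop :=
  Summable (fun k : Fin d → ℤ => ‖fCoeff d f k‖) ∧
    ∀ x, HasSum (fun k : Fin d → ℤ =>
      fCoeff d f k * Complex.exp (Complex.I * (dot d k x : ℝ))) (f x)

/-- The translate T(y)f = f(· - 2πy). -/
def Tr (y : Fin d → ℝ) (f : (Fin d → ℝ) → ℂ) : (Fin d → ℝ) → ℂ :=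
  fun x => f (x - (2 * Real.pi) • y)

/-- The space of translates V_M^f, as a set of L² functions (a.e. equality on the cube). -/
def spanTranslates (M : Matrix (Fin d) (Fin d) ℤ) (f : (Fin d → ℝ) → ℂ) :
    Set ((Fin d → ℝ) → ℂ) :=
  {g | ∃ a : (Fin d → ℝ) → ℂ,
      g =ᵐ[volume.restrict (cube d)] fun x => ∑ᶠ y ∈ pattern d M, a y * Tr d y f x}

/-- Orthonormality of the translates of f on the pattern. -/
def OrthonormalTranslates (M : Matrix (Fin d) (Fin d) ℤ) (f : (Fin d → ℝ) → ℂ) : Prop :=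
  ∀ y ∈ pattern d M, ∀ y' ∈ pattern d M,
    torusInner d (Tr d y f) (Tr d y' f) = if y = y' then 1 else 0

/-- A fundamental interpolant of V_M^f. -/
def IsFundamentalInterpolant (M : Matrix (Fin d) (Fin d) ℤ) (f Λ : (Fin d → ℝ) → ℂ) : Prop :=
  Λ ∈ spanTranslates d M f ∧
    ∀ y ∈ pattern d M,
      Λ ((2 * Real.pi) • y) = if ∃ z : Fin d → ℤ, y = fun i => (z i : ℝ) then 1 else 0

/-- Frobenius inner product of complex matrices. -/
def frobInner (A B : Matrix (Fin d) (Fin d) ℂ) : ℂ :=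
  ∑ i, ∑ j, A i j * (starRingEnd ℂ) (B i j)

/-- Application of a fourth-order (real) tensor to a complex matrix. -/
def capply (C : Fin d → Fin d → Fin d → Fin d → ℝ) (γ : Matrix (Fin d) (Fin d) ℂ) :
    Matrix (Fin d) (Fin d) ℂ :=
  Matrix.of fun i j => ∑ a, ∑ b, (C i j a b : ℂ) * γ a b

/-- The usual symmetries of a stiffness tensor. -/
def TensorSymm (C : Fin d → Fin d → Fin d → Fin d → ℝ) : Prop :=
  ∀ i j k l, C i j k l = C j i k l ∧ C i j k l = C i j l k ∧ C i j k l = C k l i j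

/-- Positive definiteness of a reference stiffness on symmetric matrices. -/
def TensorPosDef (C : Fin d → Fin d → Fin d → Fin d → ℝ) : Prop :=
  ∃ c : ℝ, 0 < c ∧ ∀ γ : Matrix (Fin d) (Fin d) ℂ, γ.IsSymm →
    c * ∑ i, ∑ j, Complex.normSq (γ i j) ≤ (frobInner d (capply d C γ) γ).re

/-- The symmetrised gradient D_k u = (i/2)(k uᵀ + u kᵀ). -/
def symGrad (k : Fin d → ℝ) (u : Fin d → ℂ) : Matrix (Fin d) (Fin d) ℂ :=
  Matrix.of fun i j => (Complex.I / 2) * ((k i : ℂ) * u j + u i * (k j : ℂ))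

/-- The adjoint D_k* of the symmetrised gradient (w.r.t. Frobenius inner product). -/
def symGradAdj (k : Fin d → ℝ) (A : Matrix (Fin d) (Fin d) ℂ) : Fin d → ℂ :=
  fun j => ∑ i, (-Complex.I / 2) * (k i : ℂ) * (A i j + A j i)

/-- The acoustic tensor A(k) = D_k* ∘ C⁰ ∘ D_k as a d×d complex matrix. -/
def acoustic (C0 : Fin d → Fin d → Fin d → Fin d → ℝ) (k : Fin d → ℝ) :
    Matrix (Fin d) (Fin d) ℂ :=
  Matrix.of fun i j => symGradAdj d k (capply d C0 (symGrad d k (Pi.single j 1))) i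

/-- The Green operator symbol Γ̂⁰_k = D_k ∘ A(k)⁻¹ ∘ D_k* for real k ≠ 0. -/
def greenSymR (C0 : Fin d → Fin d → Fin d → Fin d → ℝ) (k : Fin d → ℝ)
    (E : Matrix (Fin d) (Fin d) ℂ) : Matrix (Fin d) (Fin d) ℂ :=
  symGrad d k ((acoustic d C0 k)⁻¹.mulVec (symGradAdj d k E))

/-- The Green operator symbol for integer frequencies, Γ̂⁰_0 := 0. -/
def greenSymZ (C0 : Fin d → Fin d → Fin d → Fin d → ℝ) (k : Fin d → ℤ)
    (E : Matrix (Fin d) (Fin d) ℂ) : Matrix (Fin d) (Fin d) ℂ :=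
  if k = 0 then 0 else greenSymR d C0 (fun i => (k i : ℝ)) E

/-- Entrywise Fourier coefficient of a matrix field. -/
def mFourier (ε : (Fin d → ℝ) → Matrix (Fin d) (Fin d) ℂ) (k : Fin d → ℤ) :
    Matrix (Fin d) (Fin d) ℂ :=
  Matrix.of fun i j => fCoeff d (fun x => ε x i j) k

/-- The periodised Green symbol Γ̂^p_h = m Σ_z Γ̂⁰_{h+Mᵀz} |c_{h+Mᵀz}(f)|². -/
def gammaPSym (M : Matrix (Fin d) (Fin d) ℤ) (C0 : Fin d → Fin d → Fin d → Fin d → ℝ)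
    (f : (Fin d → ℝ) → ℂ) (h : Fin d → ℤ) (E : Matrix (Fin d) (Fin d) ℂ) :
    Matrix (Fin d) (Fin d) ℂ :=
  (M.det.natAbs : ℂ) • ∑' z : Fin d → ℤ,
    ((Complex.normSq (fCoeff d f (h + Matrix.mulVec Mᵀ z)) : ℝ) : ℂ) •
      greenSymZ d C0 (h + Matrix.mulVec Mᵀ z) E

/-- The periodised Green operator applied to a coefficient field: DFT, multiply, inverse DFT. -/
def gammaP (M : Matrix (Fin d) (Fin d) ℤ) (C0 : Fin d → Fin d → Fin d → Fin d → ℝ)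
    (f : (Fin d → ℝ) → ℂ) (V : (Fin d → ℝ) → Matrix (Fin d) (Fin d) ℂ)
    (x : Fin d → ℝ) : Matrix (Fin d) (Fin d) ℂ :=
  ((M.det.natAbs : ℂ))⁻¹ • ∑ᶠ h ∈ genSet d Mᵀ,
    Complex.exp (2 * Real.pi * Complex.I * (dot d h x : ℝ)) •
      gammaPSym d M C0 f h
        (∑ᶠ y ∈ pattern d M, Complex.exp (-(2 * Real.pi * Complex.I) * (dot d h y : ℝ)) • V y)

/-- The Dirichlet kernel D_M. -/
def dirichlet (M : Matrix (Fin d) (Fin d) ℤ) : (Fin d → ℝ) → ℂ :=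
  fun x => ∑ᶠ h ∈ genSet d Mᵀ, Complex.exp (Complex.I * (dot d h x : ℝ))

end ElastFFT

/-!
Expanding `f` in its Fourier series, the left-hand side becomes
`∑ₖ c_k(f) · m⁻¹ ∑_{y ∈ P(M)} e^{2πi (k - h)·y}`, so everything rests on the orthogonality relation
`∑_{y ∈ P(M)} e^{2πi l·y} = m` if `l ∈ Mᵀℤ^d` and `0` otherwise.
The map `y ↦ My` identifies `P(M)` with `ℤ^d / Mℤ^d`, a group of order `|det M|`, and turns
`y ↦ e^{2πi l·y}` into the character `n ↦ e^{2πi l·M⁻¹n}`, which is trivial exactly when `l ∈ Mᵀℤ^d`.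
-/

theorem Matrix.index_range_mulVecLin {ι : Type*} [Fintype ι] [DecidableEq ι]
    {M : Matrix ι ι ℤ} (hM : M.det ≠ 0) :
    (LinearMap.range M.mulVecLin).toAddSubgroup.index = M.det.natAbs := by
  have hinj : Function.Injective M.mulVecLin := mulVec_injective_of_det_ne_zero hM
  let e := LinearEquiv.ofInjective M.mulVecLin hinj
  have h := Submodule.natAbs_det_basis_change (Pi.basisFun ℤ ι) _ ((Pi.basisFun ℤ ι).map e)
  have hcols : ((↑) ∘ (Pi.basisFun ℤ ι).map e : ι → ι → ℤ) = fun i j => M j i := by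
    ext i j
    simp [e, LinearEquiv.ofInjective_apply]
  rw [hcols, Pi.basisFun_det_apply] at h
  exact h.symm.trans (congrArg Int.natAbs (det_transpose M))

namespace AddChar

variable {A M : Type*} [AddCommGroup A] [CommMonoid M]

def liftQuotient (N : AddSubgroup A) (ψ : AddChar A M) (hψ : ∀ a ∈ N, ψ a = 1) :
    AddChar (A ⧸ N) M :=
  toAddMonoidHomEquiv.symm <| QuotientAddGroup.lift N (toAddMonoidHomEquiv ψ) fun a ha => by
    simpa [AddMonoidHom.mem_ker] using hψ a ha

@[simp]
theorem liftQuotient_mk (N : AddSubgroup A) (ψ : AddChar A M) (hψ : ∀ a ∈ N, ψ a = 1) (a : A) :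
    liftQuotient N ψ hψ a = ψ a :=
  rfl

end AddChar

namespace ElastFFT

section

variable {d : ℕ}

def expDot (l : Fin d → ℤ) : AddChar (Fin d → ℝ) ℂ where
  toFun y := Complex.exp (2 * Real.pi * I * (dot d l y : ℝ))
  map_zero_eq_one' := by simp [dot]
  map_add_eq_mul' y y' := by
    simp only [dot, Pi.add_apply, mul_add, Finset.sum_add_distrib, ofReal_add, Complex.exp_add]

theorem expDot_apply (l : Fin d → ℤ) (y : Fin d → ℝ) :
    expDot l y = Complex.exp (2 * Real.pi * I * (dot d l y : ℝ)) :=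
  rfl

theorem expDot_eq_one_iff {l : Fin d → ℤ} {y : Fin d → ℝ} :
    expDot l y = 1 ↔ ∃ n : ℤ, dot d l y = n := by
  rw [expDot_apply, Complex.exp_eq_one_iff]
  refine exists_congr fun n => ⟨fun h => ?_, fun h => by rw [h]; push_cast; ring⟩
  have h2pi : 2 * Real.pi * I ≠ 0 := by simp [Real.pi_ne_zero]
  exact_mod_cast mul_left_cancel₀ h2pi (h.trans (mul_comm _ _))

theorem dot_eq_dotProduct (l : Fin d → ℤ) (y : Fin d → ℝ) :
    dot d l y = (fun i => (l i : ℝ)) ⬝ᵥ y :=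
  rfl

theorem dot_sub_left (k h : Fin d → ℤ) (y : Fin d → ℝ) :
    dot d (k - h) y = dot d k y - dot d h y := by
  simp only [dot, Pi.sub_apply, Int.cast_sub, sub_mul, Finset.sum_sub_distrib]

theorem dot_smul_right (k : Fin d → ℤ) (c : ℝ) (y : Fin d → ℝ) :
    dot d k (c • y) = c * dot d k y := by
  simp only [dot, Pi.smul_apply, smul_eq_mul, Finset.mul_sum, mul_left_comm]

theorem dot_intCast (l z : Fin d → ℤ) : dot d l (fun i => (z i : ℝ)) = ((l ⬝ᵥ z : ℤ) : ℝ) := by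
  simp [dot, dotProduct]

theorem intCast_mulVec (M : Matrix (Fin d) (Fin d) ℤ) (z : Fin d → ℤ) :
    (fun i => ((M *ᵥ z) i : ℝ)) = M.map (Int.cast : ℤ → ℝ) *ᵥ fun i => (z i : ℝ) :=
  funext (RingHom.map_mulVec (Int.castRingHom ℝ) M z)

theorem dot_transpose_mulVec (M : Matrix (Fin d) (Fin d) ℤ) (z : Fin d → ℤ) (y : Fin d → ℝ) :
    dot d (Mᵀ *ᵥ z) y = dot d z (mulVecR d M y) := by
  rw [dot_eq_dotProduct, dot_eq_dotProduct, mulVecR, intCast_mulVec, dotProduct_mulVec,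
    transpose_map, mulVec_transpose]

theorem eq_of_mem_Ico_of_sub_eq_intCast {a b : ℝ} {k : ℤ}
    (ha : a ∈ Set.Ico (-(1/2) : ℝ) (1/2)) (hb : b ∈ Set.Ico (-(1/2) : ℝ) (1/2))
    (h : a - b = k) : a = b := by
  obtain rfl : k = 0 := by
    have hk : (-1 : ℝ) < k ∧ (k : ℝ) < 1 := ⟨by linarith [ha.1, hb.2], by linarith [ha.2, hb.1]⟩
    norm_cast at hk
    omega
  simpa [sub_eq_zero] using h

abbrev LatticeQuotient (M : Matrix (Fin d) (Fin d) ℤ) : Type :=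
  (Fin d → ℤ) ⧸ (LinearMap.range M.mulVecLin).toAddSubgroup

/-- On `Λ(M)` this is the class of `My` modulo `Mℤ^d`; the floor only reads `My ∈ ℤ^d` as an
integer vector. -/
def latticeClass (M : Matrix (Fin d) (Fin d) ℤ) (y : Fin d → ℝ) : LatticeQuotient M :=
  QuotientAddGroup.mk fun i => ⌊mulVecR d M y i⌋

theorem latticeClass_eq {M : Matrix (Fin d) (Fin d) ℤ} {y : Fin d → ℝ} {z : Fin d → ℤ}
    (hz : mulVecR d M y = fun i => (z i : ℝ)) : latticeClass M y = QuotientAddGroup.mk z := by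
  simp [latticeClass, hz]

theorem InWiener.hasSum_sample_mul_exp {f : (Fin d → ℝ) → ℂ} (hf : InWiener d f)
    (h : Fin d → ℤ) (y : Fin d → ℝ) :
    HasSum (fun k => fCoeff d f k * expDot (k - h) y)
      (f ((2 * Real.pi) • y) * Complex.exp (-(2 * Real.pi * I) * (dot d h y : ℝ))) := by
  have hexp : ∀ k, expDot (k - h) y = Complex.exp (I * (dot d k ((2 * Real.pi) • y) : ℝ)) *
      Complex.exp (-(2 * Real.pi * I) * (dot d h y : ℝ)) := fun k => by
    rw [expDot_apply, ← Complex.exp_add]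
    congr 1
    rw [dot_sub_left, dot_smul_right]
    push_cast
    ring
  simp only [hexp, ← mul_assoc]
  exact (hf.2 _).mul_right _

section RegularMatrix

variable {M : Matrix (Fin d) (Fin d) ℤ} (hM : M.det ≠ 0)
include hM

theorem isUnit_det_map_intCast : IsUnit (M.map (Int.cast : ℤ → ℝ)).det := by
  rw [isUnit_iff_ne_zero, ← Int.cast_det]
  exact_mod_cast hM

theorem mulVecR_inv_mulVec (x : Fin d → ℝ) :
    mulVecR d M ((M.map (Int.cast : ℤ → ℝ))⁻¹ *ᵥ x) = x := by
  rw [mulVecR, mulVec_mulVec, mul_nonsing_inv _ (isUnit_det_map_intCast hM), one_mulVec]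

theorem inv_mulVec_mulVecR (y : Fin d → ℝ) :
    (M.map (Int.cast : ℤ → ℝ))⁻¹ *ᵥ mulVecR d M y = y := by
  rw [mulVecR, mulVec_mulVec, nonsing_inv_mul _ (isUnit_det_map_intCast hM), one_mulVec]

theorem injOn_latticeClass : Set.InjOn (latticeClass M) (pattern d M) := by
  rintro y ⟨⟨z, hz⟩, hy⟩ y' ⟨⟨z', hz'⟩, hy'⟩ h
  rw [latticeClass_eq hz, latticeClass_eq hz', QuotientAddGroup.eq] at h
  obtain ⟨w, hw⟩ := h
  have hdiff : y' - y = fun i => (w i : ℝ) := by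
    rw [← inv_mulVec_mulVecR hM (y' - y), ← inv_mulVec_mulVecR hM (fun i => (w i : ℝ))]
    congr 1
    simp only [mulVecR, mulVec_sub, ← intCast_mulVec] at hz hz' ⊢
    rw [hz, hz', show M *ᵥ w = -z + z' from hw]
    ext i
    simp only [Pi.sub_apply, Pi.add_apply, Pi.neg_apply, Int.cast_add, Int.cast_neg]
    ring
  funext i
  exact (eq_of_mem_Ico_of_sub_eq_intCast (hy' i) (hy i) (congrFun hdiff i)).symm

theorem surjOn_latticeClass : Set.SurjOn (latticeClass M) (pattern d M) Set.univ := by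
  rintro q -
  obtain ⟨n, rfl⟩ := QuotientAddGroup.mk_surjective q
  set x := (M.map (Int.cast : ℤ → ℝ))⁻¹ *ᵥ fun i => (n i : ℝ)
  let k : Fin d → ℤ := fun i => toIcoDiv one_pos (-(1/2)) (x i)
  let y : Fin d → ℝ := fun i => toIcoMod one_pos (-(1/2)) (x i)
  have hy : y = x - fun i => (k i : ℝ) := by
    ext i
    have := self_sub_toIcoMod one_pos (-(1/2) : ℝ) (x i)
    rw [zsmul_one] at this
    simp only [Pi.sub_apply, y, k]
    linarith
  have hMy : mulVecR d M y = fun i => ((n - M *ᵥ k) i : ℝ) := by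
    rw [hy, mulVecR, mulVec_sub, ← mulVecR, mulVecR_inv_mulVec hM, ← intCast_mulVec]
    ext i
    simp
  refine ⟨y, ⟨⟨_, hMy⟩, fun i => ?_⟩, ?_⟩
  · have := toIcoMod_mem_Ico one_pos (-(1/2) : ℝ) (x i)
    norm_num at this ⊢
    exact this
  · rw [latticeClass_eq hMy, QuotientAddGroup.eq]
    exact ⟨k, by simp⟩

theorem bijOn_latticeClass : Set.BijOn (latticeClass M) (pattern d M) Set.univ :=
  ⟨Set.mapsTo_univ _ _, injOn_latticeClass hM, surjOn_latticeClass hM⟩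

theorem expDot_inv_mulVec_mulVec (l w : Fin d → ℤ) :
    expDot l ((M.map (Int.cast : ℤ → ℝ))⁻¹ *ᵥ fun i => ((M *ᵥ w) i : ℝ)) = 1 := by
  rw [intCast_mulVec, ← mulVecR, inv_mulVec_mulVecR hM, expDot_eq_one_iff, dot_intCast]
  exact ⟨_, rfl⟩

/-- The character `n ↦ e^{2πi l·M⁻¹n}` of `ℤ^d / Mℤ^d`. -/
def quotientChar (l : Fin d → ℤ) : AddChar (LatticeQuotient M) ℂ :=
  AddChar.liftQuotient _
    ((expDot l).compAddMonoidHom ((M.map (Int.cast : ℤ → ℝ))⁻¹.mulVecLin.toAddMonoidHom.comp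
      (AddMonoidHom.compLeft (Int.castAddHom ℝ) (Fin d))))
    (by rintro _ ⟨w, rfl⟩; exact expDot_inv_mulVec_mulVec hM l w)

theorem quotientChar_mk (l n : Fin d → ℤ) :
    quotientChar hM l (QuotientAddGroup.mk n) =
      expDot l ((M.map (Int.cast : ℤ → ℝ))⁻¹ *ᵥ fun i => (n i : ℝ)) :=
  rfl

theorem quotientChar_latticeClass (l : Fin d → ℤ) {y : Fin d → ℝ} (hy : y ∈ lattice d M) :
    quotientChar hM l (latticeClass M y) = expDot l y := by
  obtain ⟨z, hz⟩ := hy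
  rw [latticeClass_eq hz, quotientChar_mk, ← hz, inv_mulVec_mulVecR hM]

theorem quotientChar_eq_zero_iff {l : Fin d → ℤ} :
    quotientChar hM l = 0 ↔ l ∈ Set.range (Mᵀ *ᵥ ·) := by
  constructor
  · intro hl
    have hint : ∀ n : Fin d → ℤ,
        ∃ r : ℤ, dot d l ((M.map (Int.cast : ℤ → ℝ))⁻¹ *ᵥ fun i => (n i : ℝ)) = r :=
      fun n => expDot_eq_one_iff.mp ((AddChar.eq_zero_iff.mp hl) (QuotientAddGroup.mk n))
    choose r hr using fun j => hint (Pi.single j 1)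
    have hr' : (fun j => (r j : ℝ)) = (fun i => (l i : ℝ)) ᵥ* (M.map (Int.cast : ℤ → ℝ))⁻¹ := by
      ext j
      have hsingle : (fun i => ((Pi.single j 1 : Fin d → ℤ) i : ℝ)) = Pi.single j 1 := by
        ext i
        simp [Pi.single_apply]
      rw [← hr j, dot_eq_dotProduct, hsingle, dotProduct_mulVec, dotProduct_single, mul_one]
    have hcast : (fun i => ((Mᵀ *ᵥ r) i : ℝ)) = fun i => (l i : ℝ) := by
      rw [intCast_mulVec, transpose_map, mulVec_transpose, hr', vecMul_vecMul,
        nonsing_inv_mul _ (isUnit_det_map_intCast hM), vecMul_one]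
    exact ⟨r, funext fun i => Int.cast_injective (congrFun hcast i)⟩
  · rintro ⟨z, rfl⟩
    refine AddChar.eq_zero_iff.mpr fun q => ?_
    obtain ⟨n, rfl⟩ := QuotientAddGroup.mk_surjective q
    rw [quotientChar_mk, expDot_eq_one_iff, dot_transpose_mulVec, mulVecR_inv_mulVec hM,
      dot_intCast]
    exact ⟨_, rfl⟩

theorem finite_latticeQuotient : Finite (LatticeQuotient M) :=
  Nat.finite_of_card_ne_zero <| by
    rw [← AddSubgroup.index_eq_card, index_range_mulVecLin hM]
    exact Int.natAbs_ne_zero.mpr hM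

theorem pattern_finite : (pattern d M).Finite :=
  have := finite_latticeQuotient hM
  .of_injOn (Set.mapsTo_univ _ _) (injOn_latticeClass hM) Set.finite_univ

theorem finsum_pattern_expDot (l : Fin d → ℤ) :
    ∑ᶠ y ∈ pattern d M, expDot l y =
      if l ∈ Set.range (Mᵀ *ᵥ ·) then (M.det.natAbs : ℂ) else 0 := by
  have := finite_latticeQuotient hM
  let _ := Fintype.ofFinite (LatticeQuotient M)
  rw [finsum_mem_eq_of_bijOn _ (bijOn_latticeClass hM)
      fun y hy => (quotientChar_latticeClass hM l hy.1).symm,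
    finsum_mem_univ, finsum_eq_sum_of_fintype, AddChar.sum_eq_ite, Fintype.card_eq_nat_card,
    ← AddSubgroup.index_eq_card, index_range_mulVecLin hM]
  simp only [quotientChar_eq_zero_iff hM]

end RegularMatrix

end

theorem dft_samples_eq_bracketSum_general
    (d : ℕ)
    (M : Matrix (Fin d) (Fin d) ℤ) (hM : M.det ≠ 0)
    (f : (Fin d → ℝ) → ℂ) (hfW : InWiener d f) :
    ∀ h ∈ genSet d Mᵀ,
      (M.det.natAbs : ℂ)⁻¹ *
        ∑ᶠ y ∈ pattern d M,
          f ((2 * Real.pi) • y) *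
            Complex.exp (-(2 * Real.pi * Complex.I) * (dot d h y : ℝ)) =
      ∑' z : Fin d → ℤ, fCoeff d f (h + Matrix.mulVec Mᵀ z) := by
  intro h _
  set m : ℂ := (M.det.natAbs : ℂ)
  have hm : m ≠ 0 := by simpa [m] using hM
  obtain ⟨P, hP⟩ := (pattern_finite hM).exists_finset_coe
  have hcoset : ∀ k, k - h ∈ Set.range (Mᵀ *ᵥ ·) ↔ k ∈ Set.range (h + Mᵀ *ᵥ ·) :=
    fun k => exists_congr fun z => eq_sub_iff_add_eq'
  have hsum : ∀ k, ∑ y ∈ P, fCoeff d f k * expDot (k - h) y =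
      m * (Set.range (h + Mᵀ *ᵥ ·)).indicator (fCoeff d f) k := fun k => by
    rw [← Finset.mul_sum, ← finsum_mem_coe_finset, hP, finsum_pattern_expDot hM, hcoset,
      Set.indicator_apply]
    split_ifs <;> ring
  have hbracket := (hasSum_sum fun y (_ : y ∈ P) => hfW.hasSum_sample_mul_exp h y).mul_left m⁻¹
  simp only [hsum, ← mul_assoc, inv_mul_cancel₀ hm, one_mul] at hbracket
  have hinj : Function.Injective (h + Mᵀ *ᵥ ·) :=
    (add_right_injective h).comp (mulVec_injective_of_det_ne_zero (by rwa [det_transpose]))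
  rw [← finsum_mem_coe_finset, hP] at hbracket
  exact (hinj.hasSum_range_iff.mp (hasSum_subtype_iff_indicator.mpr hbracket)).tsum_eq.symm

/-- discrete Fourier coefficients of samples equal the bracket sums. -/
theorem dft_samples_eq_bracketSum
    (d : ℕ) (hd : 0 < d)
    (M : Matrix (Fin d) (Fin d) ℤ) (hM : M.det ≠ 0)
    (f : (Fin d → ℝ) → ℂ) (hfper : TorusFun d f) (hfW : InWiener d f) :
    ∀ h ∈ genSet d Mᵀ,
      (M.det.natAbs : ℂ)⁻¹ *
        ∑ᶠ y ∈ pattern d M,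
          f ((2 * Real.pi) • y) *
            Complex.exp (-(2 * Real.pi * Complex.I) * (dot d h y : ℝ)) =
      ∑' z : Fin d → ℤ, fCoeff d f (h + Matrix.mulVec Mᵀ z) :=
  dft_samples_eq_bracketSum_general d M hM f hfW

end ElastFFT
end
end

section
/- Let M ∈ ℤ^{d×d} be regular and m := |det M|. The translates {T(y)(m^{−1/2} D_M) : y ∈ P(M)} of the normalized Dirichlet kernel m^{−1/2} D_M are orthonormal in L²(T^d). -/
open MeasureTheory Complex Matrix
open scoped BigOperators Classical

noncomputable section

namespace ElastFFT

variable (d : ℕ)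

/-!
The translates of `D_M` are trigonometric polynomials with frequencies in `G(Mᵀ)`, so by the
orthonormality of the exponentials `⟨T(y) D_M, T(y') D_M⟩ = ∑_{h ∈ G(Mᵀ)} e^{2πi h·(y' - y)}`.
Since `G(Mᵀ)` is a system of representatives of `ℤ^d / Mᵀℤ^d`, a group of order `m`, and
`h ↦ e^{2πi h·(y' - y)}` is a character of this quotient when `y' - y ∈ Λ(M)`, the sum is `m`
for `y = y'`; otherwise it vanishes, because `y' - y` then has a coordinate in `(-1, 1) \ {0}`,
so the character is nontrivial.
-/

open scoped ComplexConjugate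

section GenSet

variable {d} {N : Matrix (Fin d) (Fin d) ℤ}

lemma mulVecR_intCast (z : Fin d → ℤ) :
    mulVecR d N (fun i => (z i : ℝ)) = fun i => ((N *ᵥ z) i : ℝ) := by
  funext i
  exact (RingHom.map_mulVec (Int.castRingHom ℝ) N z i).symm

lemma mulVecR_injective (hN : N.det ≠ 0) : Function.Injective (mulVecR d N) :=
  Matrix.mulVec_injective_of_det_ne_zero <| by
    rw [← Int.cast_det]
    exact_mod_cast hN

lemma eq_of_mem_genSet_of_sub_mem_range (hN : N.det ≠ 0) {g g' : Fin d → ℤ}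
    (hg : g ∈ genSet d N) (hg' : g' ∈ genSet d N)
    (hgg' : g - g' ∈ LinearMap.range N.mulVecLin) : g = g' := by
  obtain ⟨y, hy, hgy⟩ := hg
  obtain ⟨y', hy', hgy'⟩ := hg'
  obtain ⟨z, hz⟩ := hgg'
  rw [Matrix.mulVecLin_apply] at hz
  have hyz : y - y' = fun i => (z i : ℝ) := by
    apply mulVecR_injective hN
    rw [mulVecR, Matrix.mulVec_sub, ← mulVecR, ← mulVecR, ← hgy, ← hgy', mulVecR_intCast, hz]
    funext i
    simp
  have hz0 : z = 0 := by
    funext i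
    have hi : y i - y' i = z i := congrFun hyz i
    obtain ⟨hy₁, hy₂⟩ := hy i
    obtain ⟨hy₁', hy₂'⟩ := hy' i
    have h₁ : (-1 : ℝ) < z i := by linarith
    have h₂ : (z i : ℝ) < 1 := by linarith
    have : -1 < z i ∧ z i < 1 := ⟨by exact_mod_cast h₁, by exact_mod_cast h₂⟩
    simp only [Pi.zero_apply]
    omega
  rw [hz0, Matrix.mulVec_zero, eq_comm, sub_eq_zero] at hz
  exact hz

lemma exists_mem_genSet_sub_mem_range (hN : N.det ≠ 0) (h : Fin d → ℤ) :
    ∃ g ∈ genSet d N, h - g ∈ LinearMap.range N.mulVecLin := by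
  have hdet : IsUnit (N.map (Int.cast : ℤ → ℝ)).det := by
    rw [← Int.cast_det, isUnit_iff_ne_zero]
    exact_mod_cast hN
  set w := (N.map (Int.cast : ℤ → ℝ))⁻¹ *ᵥ fun i => (h i : ℝ)
  set z : Fin d → ℤ := fun i => round (w i)
  refine ⟨h - N *ᵥ z, ⟨w - fun i => (z i : ℝ), fun i => ?_, ?_⟩, z, by simp⟩
  · have h1 := Int.floor_le (w i + 1 / 2)
    have h2 := Int.lt_floor_add_one (w i + 1 / 2)
    simp only [Pi.sub_apply, Set.mem_Ico, z, round_eq]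
    constructor <;> linarith
  · rw [mulVecR, Matrix.mulVec_sub, ← mulVecR, ← mulVecR, mulVecR_intCast, mulVecR,
      Matrix.mulVec_mulVec, Matrix.mul_nonsing_inv _ hdet, Matrix.one_mulVec]
    funext i
    simp

def genSetEquivQuotient (hN : N.det ≠ 0) :
    genSet d N ≃ (Fin d → ℤ) ⧸ LinearMap.range N.mulVecLin :=
  Equiv.ofBijective (fun g => Submodule.Quotient.mk (g : Fin d → ℤ))
    ⟨fun g g' hgg' => Subtype.ext <| eq_of_mem_genSet_of_sub_mem_range hN g.2 g'.2 <|
        (Submodule.Quotient.eq _).mp hgg',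
      fun q => by
        obtain ⟨h, rfl⟩ := Submodule.Quotient.mk_surjective _ q
        obtain ⟨g, hg, hhg⟩ := exists_mem_genSet_sub_mem_range hN h
        exact ⟨⟨g, hg⟩, ((Submodule.Quotient.eq _).mpr hhg).symm⟩⟩

lemma natCard_quotient_range_mulVecLin {ι : Type*} [Fintype ι] [DecidableEq ι]
    {A : Matrix ι ι ℤ} (hA : A.det ≠ 0) :
    Nat.card ((ι → ℤ) ⧸ LinearMap.range A.mulVecLin) = A.det.natAbs := by
  rw [← Submodule.natAbs_det_equiv _
    (LinearEquiv.ofInjective _ (Matrix.mulVec_injective_of_det_ne_zero hA))]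
  congr 1
  rw [← LinearMap.det_toLin' A]
  congr 1

lemma natCard_genSet (hN : N.det ≠ 0) : Nat.card (genSet d N) = N.det.natAbs := by
  rw [Nat.card_congr (genSetEquivQuotient hN), natCard_quotient_range_mulVecLin hN]

lemma genSet_finite (hN : N.det ≠ 0) : (genSet d N).Finite := by
  refine Nat.finite_of_card_ne_zero ?_
  rw [natCard_genSet hN]
  exact Int.natAbs_ne_zero.mpr hN

lemma card_toFinset_genSet (hN : N.det ≠ 0) :
    (genSet_finite hN).toFinset.card = N.det.natAbs := by
  rw [← Nat.card_eq_card_finite_toFinset, natCard_genSet hN]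

lemma sum_genSet_addChar_eq_zero (hN : N.det ≠ 0)
    {ψ : AddChar (Fin d → ℤ) ℂ} (hψN : ∀ z, ψ (N *ᵥ z) = 1) (hψ : ψ ≠ 0) :
    ∑ h ∈ (genSet_finite hN).toFinset, ψ h = 0 := by
  set H := LinearMap.range N.mulVecLin
  have : Finite ((Fin d → ℤ) ⧸ H) := Nat.finite_of_card_ne_zero <| by
    rw [natCard_quotient_range_mulVecLin hN]
    exact Int.natAbs_ne_zero.mpr hN
  let _ := Fintype.ofFinite ((Fin d → ℤ) ⧸ H)
  let ψH : AddChar ((Fin d → ℤ) ⧸ H) ℂ := AddChar.toAddMonoidHomEquiv.symm <|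
    QuotientAddGroup.lift H.toAddSubgroup ψ.toAddMonoidHom <| by
      rintro _ ⟨z, rfl⟩
      exact congrArg Additive.ofMul (hψN z)
  have hψH : ψH ≠ 0 := by
    obtain ⟨x, hx⟩ := AddChar.ne_zero_iff.mp hψ
    exact AddChar.ne_zero_iff.mpr ⟨Submodule.Quotient.mk x, hx⟩
  calc ∑ h ∈ (genSet_finite hN).toFinset, ψ h
      = ∑ g : (genSet_finite hN).toFinset, ψ g := (Finset.sum_coe_sort _ _).symm
    _ = ∑ q, ψH q := Fintype.sum_equiv ((Equiv.setCongr (genSet_finite hN).coe_toFinset).trans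
        (genSetEquivQuotient hN)) _ _ fun _ => rfl
    _ = 0 := AddChar.sum_eq_zero_iff_ne_zero.mpr hψH

end GenSet

section FourierModes

variable {d}

def fourierMode (k : Fin d → ℤ) (x : Fin d → ℝ) : ℂ := exp (I * dot d k x)

lemma fourierMode_eq_prod (k : Fin d → ℤ) (x : Fin d → ℝ) :
    fourierMode k x = ∏ i, exp (I * k i * x i) := by
  rw [fourierMode, ← Complex.exp_sum, dot]
  push_cast
  rw [Finset.mul_sum]
  simp_rw [mul_assoc]

lemma continuous_fourierMode (k : Fin d → ℤ) : Continuous (fourierMode k) := by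
  unfold fourierMode dot
  fun_prop

lemma fourierMode_mul_conj (k k' : Fin d → ℤ) (x : Fin d → ℝ) :
    fourierMode k x * conj (fourierMode k' x) = fourierMode (k - k') x := by
  simp only [fourierMode, ← Complex.exp_conj, map_mul, conj_I, conj_ofReal, ← Complex.exp_add,
    dot, Pi.sub_apply, Int.cast_sub, sub_mul, Finset.sum_sub_distrib]
  congr 1
  push_cast
  ring

lemma fourierMode_add (k k' : Fin d → ℤ) (x : Fin d → ℝ) :
    fourierMode (k + k') x = fourierMode k x * fourierMode k' x := by
  simp only [fourierMode, ← Complex.exp_add, dot, Pi.add_apply, Int.cast_add, add_mul,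
    Finset.sum_add_distrib]
  push_cast
  ring_nf

lemma fourierMode_sub_right (k : Fin d → ℤ) (x w : Fin d → ℝ) :
    fourierMode k (x - w) = fourierMode k x * conj (fourierMode k w) := by
  simp only [fourierMode, ← Complex.exp_conj, map_mul, conj_I, conj_ofReal, ← Complex.exp_add,
    dot, Pi.sub_apply, mul_sub, Finset.sum_sub_distrib]
  push_cast
  ring_nf

lemma integral_Ico_exp_I_mul_intCast (n : ℤ) :
    ∫ t in Set.Ico (-Real.pi) Real.pi, exp (I * n * t) =
      if n = 0 then ((2 * Real.pi : ℝ) : ℂ) else 0 := by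
  split_ifs with hn
  · subst hn
    simp only [Int.cast_zero, mul_zero, zero_mul, Complex.exp_zero, setIntegral_const,
      Real.volume_real_Ico_of_le (by linarith [Real.pi_pos] : -Real.pi ≤ Real.pi), real_smul,
      mul_one]
    push_cast
    ring
  · have hc : I * n ≠ 0 := mul_ne_zero I_ne_zero (by exact_mod_cast hn)
    rw [setIntegral_congr_set Ico_ae_eq_Ioc,
      ← intervalIntegral.integral_of_le (by linarith [Real.pi_pos]),
      integral_exp_mul_complex hc, div_eq_zero_iff, sub_eq_zero,
      Complex.exp_eq_exp_iff_exists_int]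
    exact Or.inl ⟨n, by push_cast; ring⟩

lemma setIntegral_cube_prod (f : Fin d → ℝ → ℂ) :
    ∫ x in cube d, ∏ i, f i (x i) = ∏ i, ∫ t in Set.Ico (-Real.pi) Real.pi, f i t := by
  rw [cube, volume_pi, Measure.restrict_pi_pi, integral_fintype_prod_eq_prod]

lemma integral_cube_fourierMode (k : Fin d → ℤ) :
    ∫ x in cube d, fourierMode k x = if k = 0 then (((2 * Real.pi) ^ d : ℝ) : ℂ) else 0 := by
  simp_rw [fourierMode_eq_prod]
  rw [setIntegral_cube_prod fun i t => exp (I * k i * t)]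
  simp_rw [integral_Ico_exp_I_mul_intCast]
  split_ifs with hk
  · simp [hk]
  · obtain ⟨i, hi⟩ := Function.ne_iff.mp hk
    exact Finset.prod_eq_zero (Finset.mem_univ i) (if_neg hi)

lemma torusInner_sum_mul_fourierMode (S : Finset (Fin d → ℤ)) (a b : (Fin d → ℤ) → ℂ) :
    torusInner d (fun x => ∑ h ∈ S, a h * fourierMode h x)
      (fun x => ∑ h ∈ S, b h * fourierMode h x) = ∑ h ∈ S, a h * conj (b h) := by
  have hint : ∀ k c, Integrable (fun x => c * fourierMode k x) (volume.restrict (cube d)) :=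
    fun k c => ((continuous_fourierMode k).continuousOn.integrableOn_compact
      (isCompact_univ_pi fun _ => isCompact_Icc)).mono_set
      (Set.pi_mono fun _ _ => Set.Ico_subset_Icc_self) |>.const_mul c
  have hexpand : ∀ x, (∑ h ∈ S, a h * fourierMode h x) * conj (∑ h ∈ S, b h * fourierMode h x)
      = ∑ h ∈ S, ∑ h' ∈ S, a h * conj (b h') * fourierMode (h - h') x := by
    intro x
    rw [map_sum, Finset.sum_mul_sum]
    refine Finset.sum_congr rfl fun h _ => Finset.sum_congr rfl fun h' _ => ?_
    rw [map_mul, mul_mul_mul_comm, fourierMode_mul_conj]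
  have hvol : (((2 * Real.pi) ^ d : ℝ) : ℂ) ≠ 0 := by exact_mod_cast (by positivity)
  simp only [torusInner, hexpand]
  rw [integral_finsetSum _ fun h _ => integrable_finsetSum _ fun h' _ => hint _ _]
  simp_rw [integral_finsetSum _ fun h' _ => hint _ _, integral_const_mul,
    integral_cube_fourierMode, sub_eq_zero, mul_ite, mul_zero, Finset.sum_ite_eq,
    Finset.mul_sum]
  refine Finset.sum_congr rfl fun h hh => ?_
  rw [if_pos hh]
  field_simp

end FourierModes

section LatticeChar

variable {d}

def latticeChar (v : Fin d → ℝ) : AddChar (Fin d → ℤ) ℂ where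
  toFun h := fourierMode h ((2 * Real.pi) • v)
  map_zero_eq_one' := by simp [fourierMode, dot]
  map_add_eq_mul' h h' := fourierMode_add h h' _

lemma latticeChar_apply (v : Fin d → ℝ) (h : Fin d → ℤ) :
    latticeChar v h = fourierMode h ((2 * Real.pi) • v) := rfl

lemma latticeChar_zero : latticeChar (0 : Fin d → ℝ) = 0 := by
  ext h
  simp [latticeChar_apply, fourierMode, dot]

lemma conj_latticeChar_mul (v w : Fin d → ℝ) (h : Fin d → ℤ) :
    conj (latticeChar v h) * latticeChar w h = latticeChar (w - v) h := by
  rw [latticeChar_apply, latticeChar_apply, latticeChar_apply, smul_sub, fourierMode_sub_right,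
    mul_comm]

lemma dot_mulVec_transpose (M : Matrix (Fin d) (Fin d) ℤ) (z : Fin d → ℤ) (v : Fin d → ℝ) :
    dot d (Mᵀ *ᵥ z) v = dot d z (mulVecR d M v) := by
  simp only [dot, mulVecR, Matrix.mulVec, dotProduct, Matrix.transpose_apply, Matrix.map_apply]
  push_cast
  simp_rw [Finset.sum_mul, Finset.mul_sum]
  rw [Finset.sum_comm]
  exact Finset.sum_congr rfl fun j _ => Finset.sum_congr rfl fun i _ => by ring

lemma latticeChar_mulVec_transpose {M : Matrix (Fin d) (Fin d) ℤ} {v : Fin d → ℝ}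
    (hv : v ∈ lattice d M) (z : Fin d → ℤ) : latticeChar v (Mᵀ *ᵥ z) = 1 := by
  obtain ⟨w, hw⟩ := hv
  have hdot : dot d (Mᵀ *ᵥ z) ((2 * Real.pi) • v) = (∑ j, z j * w j : ℤ) * (2 * Real.pi) := by
    rw [dot_mulVec_transpose, mulVecR, Matrix.mulVec_smul, ← mulVecR, hw]
    simp only [dot, Pi.smul_apply, smul_eq_mul]
    push_cast
    rw [Finset.sum_mul]
    exact Finset.sum_congr rfl fun j _ => by ring
  rw [latticeChar_apply, fourierMode, hdot]
  push_cast
  rw [← Complex.exp_int_mul_two_pi_mul_I (∑ j, z j * w j)]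
  push_cast
  ring_nf

lemma latticeChar_ne_zero {v : Fin d → ℝ} (hv : ∀ i, |v i| < 1) (hv0 : v ≠ 0) :
    latticeChar v ≠ 0 := by
  obtain ⟨i, hi⟩ := Function.ne_iff.mp hv0
  refine AddChar.ne_zero_iff.mpr ⟨Pi.single i 1, fun h1 => hi ?_⟩
  have hdot : dot d (Pi.single i 1) ((2 * Real.pi) • v) = 2 * Real.pi * v i := by
    simp [dot, Pi.single_apply]
  rw [latticeChar_apply, fourierMode, hdot, Complex.exp_eq_one_iff] at h1
  obtain ⟨n, hn⟩ := h1
  have hvn : v i = n := by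
    have : ((2 * Real.pi * v i : ℝ) : ℂ) = ((n * (2 * Real.pi) : ℝ) : ℂ) :=
      mul_left_cancel₀ I_ne_zero (by rw [hn]; push_cast; ring)
    have := Complex.ofReal_injective this
    have hpi : Real.pi ≠ 0 := Real.pi_ne_zero
    field_simp at this
    linarith
  have : |(n : ℝ)| < 1 := hvn ▸ hv i
  have : n = 0 := by
    rw [← Int.cast_abs] at this
    exact Int.abs_lt_one_iff.mp (by exact_mod_cast this)
  simpa [this] using hvn

lemma sub_mem_lattice {M : Matrix (Fin d) (Fin d) ℤ} {y y' : Fin d → ℝ}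
    (hy : y ∈ lattice d M) (hy' : y' ∈ lattice d M) : y' - y ∈ lattice d M := by
  obtain ⟨z, hz⟩ := hy
  obtain ⟨z', hz'⟩ := hy'
  refine ⟨z' - z, ?_⟩
  rw [mulVecR, Matrix.mulVec_sub, ← mulVecR, ← mulVecR, hz, hz']
  funext i
  simp

lemma abs_sub_lt_one_of_mem_pattern {M : Matrix (Fin d) (Fin d) ℤ} {y y' : Fin d → ℝ}
    (hy : y ∈ pattern d M) (hy' : y' ∈ pattern d M) (i : Fin d) : |(y' - y) i| < 1 := by
  obtain ⟨h₁, h₂⟩ := hy.2 i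
  obtain ⟨h₁', h₂'⟩ := hy'.2 i
  rw [Pi.sub_apply, abs_lt]
  constructor <;> linarith

end LatticeChar

section Dirichlet

variable {d}

lemma Tr_const_mul_dirichlet {M : Matrix (Fin d) (Fin d) ℤ} (hM : Mᵀ.det ≠ 0) (c : ℂ)
    (u : Fin d → ℝ) :
    Tr d u (fun x => c * dirichlet d M x) = fun x =>
      ∑ h ∈ (genSet_finite hM).toFinset, (c * conj (latticeChar u h)) * fourierMode h x := by
  funext x
  rw [Tr, dirichlet, finsum_mem_eq_finite_toFinset_sum _ (genSet_finite hM), Finset.mul_sum]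
  refine Finset.sum_congr rfl fun h _ => ?_
  rw [← fourierMode, fourierMode_sub_right, latticeChar_apply]
  ring

end Dirichlet

theorem dirichlet_translates_orthonormal_general
    (d : ℕ)
    (M : Matrix (Fin d) (Fin d) ℤ) (hM : M.det ≠ 0) :
    OrthonormalTranslates d M
      (fun x => ((Real.sqrt (M.det.natAbs) : ℝ) : ℂ)⁻¹ * dirichlet d M x) := by
  intro y hy y' hy'
  have hMt : Mᵀ.det ≠ 0 := by rwa [Matrix.det_transpose]
  have hnorm : ((Real.sqrt (M.det.natAbs) : ℝ) : ℂ)⁻¹ * conj ((Real.sqrt (M.det.natAbs) : ℝ) : ℂ)⁻¹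
      = (M.det.natAbs : ℂ)⁻¹ := by
    rw [map_inv₀, conj_ofReal, ← mul_inv, ← ofReal_mul, Real.mul_self_sqrt (Nat.cast_nonneg _)]
    push_cast
    rfl
  rw [Tr_const_mul_dirichlet hMt, Tr_const_mul_dirichlet hMt, torusInner_sum_mul_fourierMode]
  simp_rw [map_mul, Complex.conj_conj, mul_mul_mul_comm _ (conj (latticeChar y _)), hnorm,
    conj_latticeChar_mul, ← Finset.mul_sum]
  split_ifs with hyy
  · subst hyy
    rw [sub_self, latticeChar_zero]
    simp only [AddChar.zero_apply, Finset.sum_const, nsmul_eq_mul, mul_one,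
      card_toFinset_genSet hMt, Matrix.det_transpose]
    exact inv_mul_cancel₀ (Nat.cast_ne_zero.mpr (Int.natAbs_ne_zero.mpr hM))
  · rw [sum_genSet_addChar_eq_zero hMt (latticeChar_mulVec_transpose (sub_mem_lattice hy.1 hy'.1))
      (latticeChar_ne_zero (abs_sub_lt_one_of_mem_pattern hy hy') (sub_ne_zero.mpr (Ne.symm hyy))),
      mul_zero]

/-- translates of the normalised Dirichlet kernel are orthonormal. -/
theorem dirichlet_translates_orthonormal
    (d : ℕ) (hd : 0 < d)
    (M : Matrix (Fin d) (Fin d) ℤ) (hM : M.det ≠ 0) :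
    OrthonormalTranslates d M
      (fun x => ((Real.sqrt (M.det.natAbs) : ℝ) : ℂ)⁻¹ * dirichlet d M x) :=
  dirichlet_translates_orthonormal_general d M hM

end ElastFFT
end
end

section
/- Let C⁰ be a positive definite reference stiffness with the usual symmetries. Then for every k ∈ ℝ^d with k ≠ 0, the Green operator symbol satisfies the projection identity Γ̂⁰_k : (C⁰ : (Γ̂⁰_k : E)) = Γ̂⁰_k : E for all E ∈ Sym; i.e. Γ̂⁰_k ∘ C⁰ ∘ Γ̂⁰_k = Γ̂⁰_k, so C⁰ ∘ Γ̂⁰_k is a projection on Sym. -/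
open MeasureTheory Complex Matrix
open scoped BigOperators Classical

noncomputable section

namespace ElastFFT

variable (d : ℕ)

/-! With `A(k) = D_k* C⁰ D_k`, the identity `Γ̂ C⁰ Γ̂ = D A⁻¹ (D* C⁰ D) A⁻¹ D* = D A⁻¹ D*` is
pure algebra once `A(k)` is invertible. Invertibility comes from `⟨A u, u⟩ = ⟨C⁰ D_k u, D_k u⟩`:
by positive definiteness this vanishes only if `D_k u = 0`, which forces `u = 0` when `k ≠ 0`. -/

section GreenOperator

variable {d}

def symGradₗ (k : Fin d → ℝ) : (Fin d → ℂ) →ₗ[ℂ] Matrix (Fin d) (Fin d) ℂ where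
  toFun := symGrad d k
  map_add' u v := by ext i j; simp only [symGrad, of_apply, Pi.add_apply, Matrix.add_apply]; ring
  map_smul' c u := by
    ext i j
    simp only [symGrad, of_apply, Pi.smul_apply, Matrix.smul_apply, smul_eq_mul, RingHom.id_apply]
    ring

def capplyₗ (C : Fin d → Fin d → Fin d → Fin d → ℝ) :
    Matrix (Fin d) (Fin d) ℂ →ₗ[ℂ] Matrix (Fin d) (Fin d) ℂ where
  toFun := capply d C
  map_add' γ δ := by
    ext i j; simp only [capply, of_apply, Matrix.add_apply, mul_add, Finset.sum_add_distrib]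
  map_smul' c γ := by
    ext i j
    simp only [capply, of_apply, Matrix.smul_apply, smul_eq_mul, Finset.mul_sum, RingHom.id_apply,
      mul_left_comm]

def symGradAdjₗ (k : Fin d → ℝ) : Matrix (Fin d) (Fin d) ℂ →ₗ[ℂ] (Fin d → ℂ) where
  toFun := symGradAdj d k
  map_add' A B := by
    ext j
    simp only [symGradAdj, Pi.add_apply, Matrix.add_apply, ← Finset.sum_add_distrib]
    exact Finset.sum_congr rfl fun i _ => by ring
  map_smul' c A := by
    ext j
    simp only [symGradAdj, Pi.smul_apply, Matrix.smul_apply, smul_eq_mul, Finset.mul_sum,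
      RingHom.id_apply]
    exact Finset.sum_congr rfl fun i _ => by ring

theorem acoustic_eq_toMatrix' (C0 : Fin d → Fin d → Fin d → Fin d → ℝ) (k : Fin d → ℝ) :
    acoustic d C0 k = LinearMap.toMatrix' (symGradAdjₗ k ∘ₗ capplyₗ C0 ∘ₗ symGradₗ k) :=
  rfl

theorem symGradAdj_capply_symGrad (C0 : Fin d → Fin d → Fin d → Fin d → ℝ) (k : Fin d → ℝ)
    (u : Fin d → ℂ) :
    symGradAdj d k (capply d C0 (symGrad d k u)) = acoustic d C0 k *ᵥ u := by
  rw [acoustic_eq_toMatrix', LinearMap.toMatrix'_mulVec]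
  rfl

theorem symGrad_isSymm (k : Fin d → ℝ) (u : Fin d → ℂ) : (symGrad d k u).IsSymm := by
  ext i j
  simp only [symGrad, transpose_apply, of_apply]
  ring

theorem frobInner_symGrad (k : Fin d → ℝ) (M : Matrix (Fin d) (Fin d) ℂ) (v : Fin d → ℂ) :
    frobInner d M (symGrad d k v) = symGradAdj d k M ⬝ᵥ star v := by
  simp only [frobInner, symGradAdj, symGrad, dotProduct, of_apply, Pi.star_apply, RCLike.star_def,
    map_mul, map_add, map_div₀, conj_I, conj_ofReal, map_ofNat, add_mul, Finset.sum_mul, mul_add,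
    Finset.sum_add_distrib]
  congr 1
  · rw [Finset.sum_comm]
    exact Finset.sum_congr rfl fun j _ => Finset.sum_congr rfl fun i _ => by ring
  · exact Finset.sum_congr rfl fun j _ => Finset.sum_congr rfl fun i _ => by ring

theorem eq_zero_of_symGrad_eq_zero {k : Fin d → ℝ} (hk : k ≠ 0) {u : Fin d → ℂ}
    (h : symGrad d k u = 0) : u = 0 := by
  obtain ⟨i, hi⟩ := Function.ne_iff.mp hk
  have hki : (k i : ℂ) ≠ 0 := by exact_mod_cast hi
  have hentry : ∀ j, (k i : ℂ) * u j + u i * k j = 0 := fun j => by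
    simpa [symGrad, I_ne_zero] using congrFun (congrFun h i) j
  have hui : u i = 0 := by
    have : (k i : ℂ) * u i * 2 = 0 := by linear_combination hentry i
    simpa [hki] using this
  funext j
  simpa [hui, hki] using hentry j

theorem TensorPosDef.eq_zero_of_re_frobInner_nonpos {C : Fin d → Fin d → Fin d → Fin d → ℝ}
    (hC : TensorPosDef d C) {γ : Matrix (Fin d) (Fin d) ℂ} (hγ : γ.IsSymm)
    (h : (frobInner d (capply d C γ) γ).re ≤ 0) : γ = 0 := by
  obtain ⟨c, hc, hpos⟩ := hC
  have hnonneg : ∀ i, 0 ≤ ∑ j, normSq (γ i j) := fun i =>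
    Finset.sum_nonneg fun j _ => normSq_nonneg _
  have hsum : ∑ i, ∑ j, normSq (γ i j) = 0 := by
    have := hpos γ hγ
    nlinarith [Finset.sum_nonneg fun i (_ : i ∈ Finset.univ) => hnonneg i]
  ext i j
  have hrow := (Fintype.sum_eq_zero_iff_of_nonneg hnonneg).1 hsum
  have hij := (Fintype.sum_eq_zero_iff_of_nonneg fun j => normSq_nonneg (γ i j)).1
    (congrFun hrow i)
  simpa using congrFun hij j

theorem isUnit_acoustic {C0 : Fin d → Fin d → Fin d → Fin d → ℝ} (hC0 : TensorPosDef d C0)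
    {k : Fin d → ℝ} (hk : k ≠ 0) : IsUnit (acoustic d C0 k) := by
  rw [← mulVec_injective_iff_isUnit]
  refine (injective_iff_map_eq_zero (acoustic d C0 k).mulVecLin).2 fun u hu => ?_
  refine eq_zero_of_symGrad_eq_zero hk (hC0.eq_zero_of_re_frobInner_nonpos (symGrad_isSymm k u) ?_)
  rw [frobInner_symGrad, symGradAdj_capply_symGrad, ← mulVecLin_apply, hu, zero_dotProduct]
  simp

end GreenOperator

theorem greenSym_projection_general
    (d : ℕ)
    (C0 : Fin d → Fin d → Fin d → Fin d → ℝ)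
    (hC0pos : TensorPosDef d C0)
    (k : Fin d → ℝ) (hk : k ≠ 0)
    (E : Matrix (Fin d) (Fin d) ℂ) :
    greenSymR d C0 k (capply d C0 (greenSymR d C0 k E)) = greenSymR d C0 k E := by
  have hdet := (isUnit_iff_isUnit_det _).1 (isUnit_acoustic hC0pos hk)
  simp only [greenSymR]
  rw [symGradAdj_capply_symGrad, mulVec_mulVec, nonsing_inv_mul _ hdet, one_mulVec]

/-- the projection identity Γ̂⁰_k ∘ C⁰ ∘ Γ̂⁰_k = Γ̂⁰_k for k ≠ 0. -/
theorem greenSym_projection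
    (d : ℕ) (hd : 0 < d)
    (C0 : Fin d → Fin d → Fin d → Fin d → ℝ)
    (hC0symm : TensorSymm d C0) (hC0pos : TensorPosDef d C0)
    (k : Fin d → ℝ) (hk : k ≠ 0)
    (E : Matrix (Fin d) (Fin d) ℂ) (hE : E.IsSymm) :
    greenSymR d C0 k (capply d C0 (greenSymR d C0 k E)) = greenSymR d C0 k E :=
  greenSym_projection_general d C0 hC0pos k hk E

end ElastFFT
end
end
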